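/- Let G=(V,w,m) be a finite weighted graph satisfying the curvature dimension condition CD(K,n) for some K>0 and n∈(0,∞), and let P_t := exp(tΔ). Then for every f : V → ℝ, every T ≥ 0 and every x ∈ V, Γ(P_T f)(x) ≤ e^{−2KT} · sup_{y∈V} Γf(y); in particular, sup_{x∈V} Γ(P_T f)(x) → 0 as T → ∞. -/

import Mathlib

open Filter

variable {V : Type*}

/-- The degree of a vertex in a finite weighted graph. -/
noncomputable def vertexDeg [Fintype V] (w : V → V → ℝ) (x : V) : ℝ := ∑ y, w x y

/-- The normalized degree `Deg(x) = deg(x)/m(x)`. -/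
noncomputable def nDeg [Fintype V] (w : V → V → ℝ) (m : V → ℝ) (x : V) : ℝ :=
  vertexDeg w x / m x

/-- The graph Laplacian `Δf(x) = (1/m(x)) ∑_y w(x,y)(f(y) - f(x))` on a finite weighted graph. -/
noncomputable def graphLap [Fintype V] (w : V → V → ℝ) (m : V → ℝ) (f : V → ℝ) (x : V) : ℝ :=
  (1 / m x) * ∑ y, w x y * (f y - f x)

/-- The Bakry–Émery operator `Γ`, defined by `2Γ(f,g) = Δ(fg) - fΔg - gΔf`. -/
noncomputable def bakryGamma [Fintype V] (w : V → V → ℝ) (m : V → ℝ) (f g : V → ℝ) (x : V) : ℝ :=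
  (graphLap w m (fun z => f z * g z) x - f x * graphLap w m g x - g x * graphLap w m f x) / 2

/-- The iterated Bakry–Émery operator `Γ₂`, defined by
`2Γ₂(f,g) = ΔΓ(f,g) - Γ(f,Δg) - Γ(g,Δf)`. -/
noncomputable def bakryGamma2 [Fintype V] (w : V → V → ℝ) (m : V → ℝ) (f g : V → ℝ) (x : V) : ℝ :=
  (graphLap w m (bakryGamma w m f g) x - bakryGamma w m f (graphLap w m g) x
    - bakryGamma w m g (graphLap w m f) x) / 2

/-- The curvature dimension condition `CD(K,n)`: `Γ₂(f) ≥ (1/n)(Δf)² + KΓf` pointwise. -/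
def CDCond [Fintype V] (w : V → V → ℝ) (m : V → ℝ) (K n : ℝ) : Prop :=
  ∀ f : V → ℝ, ∀ x : V,
    (1 / n) * (graphLap w m f x) ^ 2 + K * bakryGamma w m f f x ≤ bakryGamma2 w m f f x

/-- The matrix of the graph Laplacian: `(lapMatrix w m).mulVec f = graphLap w m f`. -/
noncomputable def lapMatrix [Fintype V] [DecidableEq V] (w : V → V → ℝ) (m : V → ℝ) :
    Matrix V V ℝ :=
  fun x y => w x y / m x - if x = y then vertexDeg w x / m x else 0

/-- The heat semigroup `P_t = exp (tΔ)`, as the matrix exponential of `t • Δ`. -/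
noncomputable def heatSemigroup [Fintype V] [DecidableEq V] (w : V → V → ℝ) (m : V → ℝ)
    (t : ℝ) (f : V → ℝ) : V → ℝ :=
  (NormedSpace.exp (t • lapMatrix w m)).mulVec f

section Aux

variable [Fintype V] [DecidableEq V]

attribute [local instance] Matrix.linftyOpNormedAddCommGroup Matrix.linftyOpNormedRing
  Matrix.linftyOpNormedAlgebra

lemma lapMatrix_mulVec (w : V → V → ℝ) (m : V → ℝ) (v : V → ℝ) (x : V) :
    (lapMatrix w m).mulVec v x = graphLap w m v x := by
  classical
  simp only [Matrix.mulVec, dotProduct, lapMatrix, graphLap, vertexDeg, sub_mul, ite_mul,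
    zero_mul, Finset.sum_sub_distrib, mul_sub, Finset.mul_sum, Finset.sum_ite_eq,
    Finset.mem_univ, if_true]
  congr 1
  · exact Finset.sum_congr rfl fun y _ => by ring
  · rw [Finset.sum_div, Finset.sum_mul]
    exact Finset.sum_congr rfl fun y _ => by ring

lemma gamma_eq (w : V → V → ℝ) (m : V → ℝ) (g h : V → ℝ) (x : V) :
    bakryGamma w m g h x = (1 / m x) * (∑ y, w x y * ((g y - g x) * (h y - h x))) / 2 := by
  simp only [bakryGamma, graphLap]
  congr 1
  rw [show (∑ y, w x y * ((g y - g x) * (h y - h x)))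
      = (∑ y, w x y * (g y * h y - g x * h x)) - g x * (∑ y, w x y * (h y - h x))
        - h x * (∑ y, w x y * (g y - g x)) from ?_]
  · ring
  · rw [Finset.mul_sum, Finset.mul_sum, ← Finset.sum_sub_distrib, ← Finset.sum_sub_distrib]
    exact Finset.sum_congr rfl fun y _ => by ring

lemma gamma_nonneg (w : V → V → ℝ) (m : V → ℝ) (hnonneg : ∀ x y, 0 ≤ w x y)
    (hm : ∀ x, 0 < m x) (g : V → ℝ) (x : V) : 0 ≤ bakryGamma w m g g x := by
  rw [gamma_eq]
  apply div_nonneg _ (by norm_num)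
  exact mul_nonneg (one_div_nonneg.mpr (hm x).le) <| Finset.sum_nonneg fun y _ =>
    mul_nonneg (hnonneg x y) (mul_self_nonneg _)

lemma gamma_neg_right (w : V → V → ℝ) (m : V → ℝ) (g h : V → ℝ) (x : V) :
    bakryGamma w m g (fun z => -h z) x = -bakryGamma w m g h x := by
  simp only [gamma_eq]
  rw [← neg_div, ← mul_neg, ← Finset.sum_neg_distrib]
  congr 1
  congr 1
  exact Finset.sum_congr rfl fun y _ => by ring

lemma gamma2_eq (w : V → V → ℝ) (m : V → ℝ) (v : V → ℝ) (y : V) :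
    2 * bakryGamma2 w m v v y =
      graphLap w m (fun z => bakryGamma w m v v z) y - 2 * bakryGamma w m v (graphLap w m v) y := by
  simp only [bakryGamma2]
  ring

end Aux

section Exp

variable [Fintype V] [DecidableEq V]

attribute [local instance] Matrix.linftyOpNormedAddCommGroup Matrix.linftyOpNormedRing
  Matrix.linftyOpNormedAlgebra

/-- Entry evaluation as a continuous linear map. -/
noncomputable def entryCLM (x y : V) : Matrix V V ℝ →L[ℝ] ℝ :=
  LinearMap.toContinuousLinearMap
    { toFun := fun M => M x y
      map_add' := fun _ _ => rfl
      map_smul' := fun _ _ => rfl }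

@[simp] lemma entryCLM_apply (x y : V) (M : Matrix V V ℝ) : entryCLM x y M = M x y := rfl

/-- Row sum as a continuous linear map. -/
noncomputable def rowSumCLM (x : V) : Matrix V V ℝ →L[ℝ] ℝ :=
  LinearMap.toContinuousLinearMap
    { toFun := fun M => ∑ y, M x y
      map_add' := fun A B => by simp [Finset.sum_add_distrib]
      map_smul' := fun c A => by simp [Finset.mul_sum] }

@[simp] lemma rowSumCLM_apply (x : V) (M : Matrix V V ℝ) : rowSumCLM x M = ∑ y, M x y := rfl

lemma exp_entry_hasSum (M : Matrix V V ℝ) (x y : V) :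
    HasSum (fun k : ℕ => ((k.factorial : ℝ)⁻¹ • (M ^ k)) x y) (NormedSpace.exp M x y) := by
  have h := (NormedSpace.exp_series_hasSum_exp' (𝕂 := ℝ) M).mapL (entryCLM x y)
  simp at h
  exact h

lemma exp_rowSum_hasSum (M : Matrix V V ℝ) (x : V) :
    HasSum (fun k : ℕ => ∑ y, ((k.factorial : ℝ)⁻¹ • (M ^ k)) x y)
      (∑ y, NormedSpace.exp M x y) := by
  have h := (NormedSpace.exp_series_hasSum_exp' (𝕂 := ℝ) M).mapL (rowSumCLM x)
  simp [Finset.mul_sum] at h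
  exact h

lemma pow_entry_nonneg {N : Matrix V V ℝ} (hN : ∀ x y, 0 ≤ N x y) (k : ℕ) (x y : V) :
    0 ≤ (N ^ k) x y := by
  induction k generalizing x y with
  | zero => by_cases h : x = y <;> simp [Matrix.one_apply, h]
  | succ k ih =>
    rw [pow_succ, Matrix.mul_apply]
    exact Finset.sum_nonneg fun z _ => mul_nonneg (ih x z) (hN z y)

lemma exp_entry_nonneg {N : Matrix V V ℝ} (hN : ∀ x y, 0 ≤ N x y) (x y : V) :
    0 ≤ NormedSpace.exp N x y := by
  refine hasSum_le (fun k => ?_) hasSum_zero (exp_entry_hasSum N x y)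
  have : ((k.factorial : ℝ)⁻¹ • (N ^ k)) x y = (k.factorial : ℝ)⁻¹ * (N ^ k) x y := rfl
  rw [this]
  exact mul_nonneg (by positivity) (pow_entry_nonneg hN k x y)

end Exp

section Kernel

variable [Fintype V] [DecidableEq V]

attribute [local instance] Matrix.linftyOpNormedAddCommGroup Matrix.linftyOpNormedRing
  Matrix.linftyOpNormedAlgebra

lemma heatKernel_nonneg (w : V → V → ℝ) (m : V → ℝ) (hnonneg : ∀ x y, 0 ≤ w x y)
    (hdiag : ∀ x, w x x = 0) (hm : ∀ x, 0 < m x) {t : ℝ} (ht : 0 ≤ t) (x y : V) :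
    0 ≤ NormedSpace.exp (t • lapMatrix w m) x y := by
  classical
  set c : ℝ := t * ∑ z, vertexDeg w z / m z with hc
  set N : Matrix V V ℝ := t • lapMatrix w m + c • 1 with hN
  have hdegm : ∀ z, 0 ≤ vertexDeg w z / m z := fun z =>
    div_nonneg (Finset.sum_nonneg fun p _ => hnonneg z p) (hm z).le
  have hNentry : ∀ a b, 0 ≤ N a b := by
    intro a b
    by_cases hab : a = b
    · subst hab
      have h1 : N a a = t * (w a a / m a - vertexDeg w a / m a) + c := by
        simp [hN, lapMatrix, Matrix.add_apply, Matrix.smul_apply, Matrix.one_apply,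
          smul_eq_mul]
      rw [h1, hdiag a]
      have h2 : t * (vertexDeg w a / m a) ≤ c := by
        rw [hc]
        exact mul_le_mul_of_nonneg_left
          (Finset.single_le_sum (fun z _ => hdegm z) (Finset.mem_univ a)) ht
      simp only [zero_div, zero_sub]
      nlinarith [hdegm a]
    · have h1 : N a b = t * (w a b / m a) := by
        simp [hN, lapMatrix, Matrix.add_apply, Matrix.smul_apply, Matrix.one_apply, hab,
          smul_eq_mul]
      rw [h1]
      exact mul_nonneg ht (div_nonneg (hnonneg a b) (hm a).le)
  have hsplit : t • lapMatrix w m = N + (-c) • (1 : Matrix V V ℝ) := by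
    rw [hN, neg_smul]; abel
  have hcomm : Commute N ((-c) • (1 : Matrix V V ℝ)) :=
    (Commute.one_right N).smul_right (-c)
  rw [hsplit, show NormedSpace.exp (N + (-c) • (1 : Matrix V V ℝ)) = NormedSpace.exp N * NormedSpace.exp ((-c) • (1 : Matrix V V ℝ)) from NormedSpace.exp_add_of_commute hcomm]
  have h1 : NormedSpace.exp ((-c) • (1 : Matrix V V ℝ)) = Real.exp (-c) • 1 := by
    rw [← Algebra.algebraMap_eq_smul_one]
    rw [Real.exp_eq_exp_ℝ, ← Algebra.algebraMap_eq_smul_one]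
    exact (NormedSpace.algebraMap_exp_comm (-c)).symm
  rw [h1]
  have h2 : (NormedSpace.exp N * (Real.exp (-c) • 1)) x y
      = Real.exp (-c) * NormedSpace.exp N x y := by
    rw [Matrix.mul_smul, Matrix.mul_one, Matrix.smul_apply, smul_eq_mul]
  rw [h2]
  exact mul_nonneg (Real.exp_nonneg _) (exp_entry_nonneg hNentry x y)

lemma lap_rowSum (w : V → V → ℝ) (m : V → ℝ) (x : V) : ∑ y, lapMatrix w m x y = 0 := by
  classical
  simp [lapMatrix, Finset.sum_sub_distrib, Finset.sum_ite_eq, vertexDeg, Finset.sum_div]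

lemma heatKernel_rowSum (w : V → V → ℝ) (m : V → ℝ) (t : ℝ) (x : V) :
    ∑ y, NormedSpace.exp (t • lapMatrix w m) x y = 1 := by
  classical
  set M : Matrix V V ℝ := t • lapMatrix w m with hM
  have hMrow : ∀ z : V, ∑ y, M z y = 0 := by
    intro z
    simp only [hM, Matrix.smul_apply, smul_eq_mul, ← Finset.mul_sum, lap_rowSum, mul_zero]
  have hterm : ∀ k : ℕ, (∑ y, ((k.factorial : ℝ)⁻¹ • (M ^ k)) x y)
      = if k = 0 then 1 else 0 := by
    intro k
    cases k with
    | zero => simp [Matrix.one_apply, Finset.sum_ite_eq]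
    | succ j =>
      have : ∑ y, (M ^ (j + 1)) x y = 0 := by
        rw [pow_succ]
        simp only [Matrix.mul_apply]
        rw [Finset.sum_comm]
        simp [← Finset.mul_sum, hMrow]
      simp only [Matrix.smul_apply, smul_eq_mul, ← Finset.mul_sum, this, mul_zero]
      simp
  have h1 := exp_rowSum_hasSum M x
  have h2 : HasSum (fun k : ℕ => if k = 0 then (1 : ℝ) else 0) 1 := by
    simpa using hasSum_ite_eq (0 : ℕ) (1 : ℝ)
  rw [show (fun k : ℕ => ∑ y, ((k.factorial : ℝ)⁻¹ • (M ^ k)) x y)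
      = (fun k : ℕ => if k = 0 then (1 : ℝ) else 0) from funext hterm] at h1
  exact h1.unique h2

end Kernel

section Main

variable [Fintype V] [DecidableEq V]

attribute [local instance] Matrix.linftyOpNormedAddCommGroup Matrix.linftyOpNormedRing
  Matrix.linftyOpNormedAlgebra

lemma gamma_hasDerivAt (w : V → V → ℝ) (m : V → ℝ) (v : ℝ → V → ℝ) (dv : V → ℝ) (s : ℝ) (y : V)
    (hv : ∀ z, HasDerivAt (fun s => v s z) (dv z) s) :
    HasDerivAt (fun s => bakryGamma w m (v s) (v s) y) (2 * bakryGamma w m (v s) dv y) s := by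
  simp only [gamma_eq]
  have h1 : HasDerivAt
      (fun s => 1 / m y * (∑ z, w y z * ((v s z - v s y) * (v s z - v s y))) / 2)
      (1 / m y * (∑ z, w y z * ((dv z - dv y) * (v s z - v s y)
        + (v s z - v s y) * (dv z - dv y))) / 2) s := by
    apply HasDerivAt.div_const
    apply HasDerivAt.const_mul
    apply HasDerivAt.fun_sum
    intro z _
    exact (((hv z).sub (hv y)).mul ((hv z).sub (hv y))).const_mul (w y z)
  have h2 : (∑ z, w y z * ((dv z - dv y) * (v s z - v s y) + (v s z - v s y) * (dv z - dv y)))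
      = 2 * ∑ z, w y z * ((v s z - v s y) * (dv z - dv y)) := by
    rw [Finset.mul_sum]
    exact Finset.sum_congr rfl fun z _ => by ring
  convert h1 using 1
  rw [h2]; ring

lemma key_estimate [Nonempty V] (w : V → V → ℝ) (m : V → ℝ)
    (hnonneg : ∀ x y, 0 ≤ w x y) (hdiag : ∀ x, w x x = 0) (hm : ∀ x, 0 < m x)
    (K n : ℝ) (hK : 0 < K) (hn : 0 < n) (hCD : CDCond w m K n)
    (f : V → ℝ) (T : ℝ) (hT : 0 ≤ T) (x : V) :
    bakryGamma w m (heatSemigroup w m T f) (heatSemigroup w m T f) x ≤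
      Real.exp (-2 * K * T) * ⨆ y : V, bakryGamma w m f f y := by
  classical
  set L : Matrix V V ℝ := lapMatrix w m with hL
  set E : ℝ → Matrix V V ℝ := fun s => NormedSpace.exp (s • L) with hE
  set u : ℝ → V → ℝ := fun s => (E (T - s)).mulVec f with hu
  set g : ℝ → ℝ := fun s => ∑ y, E s x y * bakryGamma w m (u s) (u s) y with hg
  set Φ : ℝ → ℝ := fun s => Real.exp (-2 * K * s) * g s with hPhi
  have hcomm : ∀ r : ℝ, E r * L = L * E r := fun r =>
    (((Commute.refl L).smul_left r).exp_left).eq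
  have hEd : ∀ s : ℝ, HasDerivAt E (E s * L) s := fun s =>
    hasDerivAt_exp_smul_const (𝕂 := ℝ) L s
  have hE2d : ∀ s : ℝ, HasDerivAt (fun s => E (T - s)) (-(E (T - s) * L)) s := by
    intro s
    have h1 : HasDerivAt (fun r : ℝ => T - r) (-1) s := (hasDerivAt_id s).const_sub T
    have h2 := HasDerivAt.scomp s (hEd (T - s)) h1
    simp at h2
    exact h2
  have huder : ∀ (s : ℝ) (z : V), HasDerivAt (fun s => u s z) (-(L.mulVec (u s) z)) s := by
    intro s z
    have h : ∀ p, HasDerivAt (fun s => E (T - s) z p * f p) (-((E (T - s) * L) z p) * f p) s := by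
      intro p
      have he := (entryCLM z p).hasFDerivAt.comp_hasDerivAt s (hE2d s)
      have he2 := he.mul_const (f p)
      simp [Function.comp] at he2
      exact he2
    have hsum : HasDerivAt (fun s => ∑ p, E (T - s) z p * f p)
        (∑ p, -((E (T - s) * L) z p) * f p) s := HasDerivAt.fun_sum fun p _ => h p
    have hval : (∑ p, -((E (T - s) * L) z p) * f p) = -(L.mulVec (u s) z) := by
      have hloc : L.mulVec (u s) = (E (T - s) * L).mulVec f := by
        rw [hu]
        simp only []
        rw [Matrix.mulVec_mulVec, ← hcomm]
      rw [hloc]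
      simp [Matrix.mulVec, dotProduct, Finset.sum_neg_distrib]
    have hfun : (fun s => u s z) = fun s => ∑ p, E (T - s) z p * f p := by
      funext s; simp [hu, Matrix.mulVec, dotProduct]
    rw [hfun, ← hval]
    exact hsum
  have hgder : ∀ s : ℝ, HasDerivAt g
      (∑ y, ((E s * L) x y * bakryGamma w m (u s) (u s) y
        + E s x y * (2 * bakryGamma w m (u s) (fun z => -(L.mulVec (u s) z)) y))) s := by
    intro s
    apply HasDerivAt.fun_sum
    intro y _
    have hEe : HasDerivAt (fun s => E s x y) ((E s * L) x y) s := by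
      have := (entryCLM x y).hasFDerivAt.comp_hasDerivAt s (hEd s)
      exact this
    have hq : HasDerivAt (fun s => bakryGamma w m (u s) (u s) y)
        (2 * bakryGamma w m (u s) (fun z => -(L.mulVec (u s) z)) y) s :=
      gamma_hasDerivAt w m u (fun z => -(L.mulVec (u s) z)) s y (fun z => huder s z)
    exact hEe.mul hq
  have hDeq : ∀ s : ℝ,
      (∑ y, ((E s * L) x y * bakryGamma w m (u s) (u s) y
        + E s x y * (2 * bakryGamma w m (u s) (fun z => -(L.mulVec (u s) z)) y)))
      = ∑ y, E s x y * (2 * bakryGamma2 w m (u s) (u s) y) := by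
    intro s
    have h1 : (∑ y, (E s * L) x y * bakryGamma w m (u s) (u s) y)
        = ∑ y, E s x y * graphLap w m (fun z => bakryGamma w m (u s) (u s) z) y := by
      have e1 : (∑ y, (E s * L) x y * bakryGamma w m (u s) (u s) y)
          = ((E s * L).mulVec (fun z => bakryGamma w m (u s) (u s) z)) x := by
        simp [Matrix.mulVec, dotProduct]
      have e2 : ((E s * L).mulVec (fun z => bakryGamma w m (u s) (u s) z))
          = (E s).mulVec (L.mulVec (fun z => bakryGamma w m (u s) (u s) z)) := by
        rw [Matrix.mulVec_mulVec]
      have e3 : L.mulVec (fun z => bakryGamma w m (u s) (u s) z)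
          = fun y => graphLap w m (fun z => bakryGamma w m (u s) (u s) z) y :=
        funext fun y => lapMatrix_mulVec w m _ y
      rw [e1, e2, e3]
      simp [Matrix.mulVec, dotProduct]
    have h2 : ∀ y, bakryGamma w m (u s) (fun z => -(L.mulVec (u s) z)) y
        = -bakryGamma w m (u s) (graphLap w m (u s)) y := by
      intro y
      have hfz : (fun z => -(L.mulVec (u s) z)) = fun z => -(graphLap w m (u s) z) := by
        funext z; rw [lapMatrix_mulVec]
      rw [hfz, gamma_neg_right]
    rw [Finset.sum_add_distrib, h1, ← Finset.sum_add_distrib]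
    apply Finset.sum_congr rfl
    intro y _
    rw [h2 y]
    have h3 := gamma2_eq w m (u s) y
    have h4 : graphLap w m (fun z => bakryGamma w m (u s) (u s) z) y
        = 2 * bakryGamma2 w m (u s) (u s) y + 2 * bakryGamma w m (u s) (graphLap w m (u s)) y := by
      linarith [h3]
    rw [h4]; ring
  have hPhider : ∀ s : ℝ, HasDerivAt Φ
      (Real.exp (-2 * K * s) *
        (∑ y, E s x y * (2 * bakryGamma2 w m (u s) (u s) y
          - 2 * K * bakryGamma w m (u s) (u s) y))) s := by
    intro s
    have hexp : HasDerivAt (fun s : ℝ => Real.exp (-2 * K * s))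
        (Real.exp (-2 * K * s) * (-2 * K)) s := by
      have h0 : HasDerivAt (fun s : ℝ => -2 * K * s) (-2 * K) s := by
        simpa using (hasDerivAt_id s).const_mul (-2 * K)
      exact h0.exp
    have hgd := hgder s
    rw [hDeq s] at hgd
    have hmul := hexp.mul hgd
    have hsplit : (∑ y, E s x y * (2 * bakryGamma2 w m (u s) (u s) y
          - 2 * K * bakryGamma w m (u s) (u s) y))
        = (∑ y, E s x y * (2 * bakryGamma2 w m (u s) (u s) y))
          - 2 * K * (∑ y, E s x y * bakryGamma w m (u s) (u s) y) := by
      rw [Finset.mul_sum, ← Finset.sum_sub_distrib]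
      exact Finset.sum_congr rfl fun y _ => by ring
    refine hmul.congr_deriv ?_
    rw [hsplit, hg]
    ring
  have hEnn : ∀ {s : ℝ}, 0 ≤ s → ∀ a b, 0 ≤ E s a b := by
    intro s hs a b
    exact heatKernel_nonneg w m hnonneg hdiag hm hs a b
  have hdiff : Differentiable ℝ Φ := fun s => (hPhider s).differentiableAt
  have hmono : MonotoneOn Φ (Set.Icc 0 T) := by
    apply monotoneOn_of_deriv_nonneg (convex_Icc 0 T) hdiff.continuous.continuousOn
      hdiff.differentiableOn
    intro s hs
    rw [interior_Icc] at hs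
    rw [(hPhider s).deriv]
    apply mul_nonneg (Real.exp_nonneg _)
    apply Finset.sum_nonneg
    intro y _
    apply mul_nonneg (hEnn hs.1.le x y)
    have hcd := hCD (u s) y
    have hsq : 0 ≤ (1 / n) * (graphLap w m (u s) y) ^ 2 :=
      mul_nonneg (by positivity) (sq_nonneg _)
    linarith [hcd, hsq]
  have hkey := hmono (Set.left_mem_Icc.mpr hT) (Set.right_mem_Icc.mpr hT) hT
  have hE0 : E 0 = 1 := by rw [hE]; simp
  have hu0 : u 0 = heatSemigroup w m T f := by
    rw [hu]
    simp only [sub_zero]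
    rfl
  have hPhi0 : Φ 0 = bakryGamma w m (heatSemigroup w m T f) (heatSemigroup w m T f) x := by
    rw [hPhi]
    simp only [hg, mul_zero, Real.exp_zero, one_mul, hE0, hu0]
    simp [Matrix.one_apply, ite_mul, one_mul, zero_mul, Finset.sum_ite_eq]
  have huT : u T = f := by
    rw [hu]
    simp only [sub_self, hE0]
    exact Matrix.one_mulVec f
  have hPhiT : Φ T ≤ Real.exp (-2 * K * T) * ⨆ y : V, bakryGamma w m f f y := by
    rw [hPhi]
    simp only [hg, huT]
    apply mul_le_mul_of_nonneg_left _ (Real.exp_nonneg _)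
    calc (∑ y, E T x y * bakryGamma w m f f y)
        ≤ ∑ y, E T x y * ⨆ z : V, bakryGamma w m f f z := by
          apply Finset.sum_le_sum
          intro y _
          exact mul_le_mul_of_nonneg_left
            (le_ciSup (Set.Finite.bddAbove (Set.finite_range _)) y) (hEnn hT x y)
      _ = (∑ y, E T x y) * ⨆ z : V, bakryGamma w m f f z := by rw [Finset.sum_mul]
      _ = 1 * ⨆ z : V, bakryGamma w m f f z := by rw [hE, heatKernel_rowSum]
      _ = ⨆ z : V, bakryGamma w m f f z := one_mul _
  calc bakryGamma w m (heatSemigroup w m T f) (heatSemigroup w m T f) x = Φ 0 := hPhi0.symm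
    _ ≤ Φ T := hkey
    _ ≤ _ := hPhiT

end Main

theorem gamma_heat_decay_of_CD [Fintype V] [DecidableEq V]
    (w : V → V → ℝ) (m : V → ℝ)
    (hsymm : ∀ x y, w x y = w y x) (hnonneg : ∀ x y, 0 ≤ w x y)
    (hdiag : ∀ x, w x x = 0) (hm : ∀ x, 0 < m x)
    (K n : ℝ) (hK : 0 < K) (hn : 0 < n) (hCD : CDCond w m K n)
    (f : V → ℝ) :
    (∀ T : ℝ, 0 ≤ T → ∀ x : V,
        bakryGamma w m (heatSemigroup w m T f) (heatSemigroup w m T f) x ≤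
          Real.exp (-2 * K * T) * ⨆ y : V, bakryGamma w m f f y) ∧
      Tendsto
        (fun T : ℝ => ⨆ x : V, bakryGamma w m (heatSemigroup w m T f) (heatSemigroup w m T f) x)
        atTop (nhds 0) := by
  classical
  cases isEmpty_or_nonempty V with
  | inl h =>
    constructor
    · intro T hT x
      exact (IsEmpty.false x).elim
    · simp only [Real.iSup_of_isEmpty]
      exact tendsto_const_nhds
  | inr h =>
    refine ⟨fun T hT x => key_estimate w m hnonneg hdiag hm K n hK hn hCD f T hT x, ?_⟩
    have hub : ∀ T : ℝ, 0 ≤ T →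
        (⨆ x : V, bakryGamma w m (heatSemigroup w m T f) (heatSemigroup w m T f) x)
          ≤ Real.exp (-2 * K * T) * ⨆ y : V, bakryGamma w m f f y :=
      fun T hT => ciSup_le fun x => key_estimate w m hnonneg hdiag hm K n hK hn hCD f T hT x
    have hlb : ∀ T : ℝ,
        0 ≤ ⨆ x : V, bakryGamma w m (heatSemigroup w m T f) (heatSemigroup w m T f) x :=
      fun T => Real.iSup_nonneg fun x => gamma_nonneg w m hnonneg hm _ x
    have h2K : Tendsto (fun T : ℝ => 2 * K * T) atTop atTop :=
      Tendsto.const_mul_atTop (by linarith) tendsto_id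
    have h1 : Tendsto (fun T : ℝ => Real.exp (-2 * K * T) * ⨆ y : V, bakryGamma w m f f y)
        atTop (nhds 0) := by
      have h2 := (Real.tendsto_exp_atBot.comp (tendsto_neg_atTop_atBot.comp h2K)).mul_const
        (⨆ y : V, bakryGamma w m f f y)
      rw [zero_mul] at h2
      have heq : (fun T : ℝ => Real.exp (-2 * K * T) * ⨆ y : V, bakryGamma w m f f y)
          = fun T : ℝ => Real.exp (-(2 * K * T)) * ⨆ y : V, bakryGamma w m f f y := by
        funext T
        rw [show -2 * K * T = -(2 * K * T) by ring]
      rw [heq]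
      exact h2
    apply squeeze_zero' (Eventually.of_forall hlb) ?_ h1
    filter_upwards [eventually_ge_atTop 0] with T hT using hub T hT
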